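/- Let I be the left ideal of R<x,x*> generated by a homogeneous polynomial p that contains no term (word) containing a factor x_i x_i* or x_i* x_i for any i. Then I is real. -/

import Mathlib

open scoped BigOperators

noncomputable section

/-- The free real *-algebra on `g` variables `x₁,…,x_g` and their formal adjoints
`x₁*,…,x_g*`, modeled as the monoid algebra of the free monoid on `2g` letters,
where `Sum.inl i` is `xᵢ` and `Sum.inr i` is `xᵢ*`. -/
abbrev FreeStarAlg (g : ℕ) := MonoidAlgebra ℝ (FreeMonoid (Fin g ⊕ Fin g))

namespace FreeStarAlg

variable {g : ℕ}

/-- The involution on words: reverse the word and star each letter. -/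
def starWord (w : FreeMonoid (Fin g ⊕ Fin g)) : FreeMonoid (Fin g ⊕ Fin g) :=
  FreeMonoid.ofList (((FreeMonoid.toList w).map Sum.swap).reverse)

/-- The involution `p ↦ p*` on the free *-algebra. -/
def starP (p : FreeStarAlg g) : FreeStarAlg g :=
  MonoidAlgebra.ofCoeff (Finsupp.mapDomain starWord p.coeff)

/-- The monomial corresponding to a word. -/
def mono (w : FreeMonoid (Fin g ⊕ Fin g)) : FreeStarAlg g :=
  MonoidAlgebra.single w 1

/-- Degree of a noncommutative polynomial. -/
def deg (p : FreeStarAlg g) : ℕ :=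
  p.coeff.support.sup fun w => (FreeMonoid.toList w).length

/-- `p` is homogeneous of degree `d`: every word appearing in `p` has length `d`. -/
def IsHom (d : ℕ) (p : FreeStarAlg g) : Prop :=
  ∀ w ∈ p.coeff.support, (FreeMonoid.toList w).length = d

/-- `p` is a (finite) sum of hermitian squares `qᵢ* qᵢ`. -/
def IsSOS (p : FreeStarAlg g) : Prop :=
  ∃ (k : ℕ) (q : Fin k → FreeStarAlg g), p = ∑ i, starP (q i) * q i

/-- Membership in `I + I*`. -/
def MemIplusIstar (I : Submodule (FreeStarAlg g) (FreeStarAlg g)) (p : FreeStarAlg g) : Prop :=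
  ∃ u ∈ I, ∃ v ∈ I, p = u + starP v

/-- A left ideal `I` is real if `∑ aᵢ* aᵢ ∈ I + I*` forces every `aᵢ ∈ I`. -/
def IsRealIdeal (I : Submodule (FreeStarAlg g) (FreeStarAlg g)) : Prop :=
  ∀ (r : ℕ) (a : Fin r → FreeStarAlg g),
    MemIplusIstar I (∑ i, starP (a i) * a i) → ∀ i, a i ∈ I

/-- The left ideal generated by a set `S`. -/
def leftIdealGen (S : Set (FreeStarAlg g)) : Submodule (FreeStarAlg g) (FreeStarAlg g) :=
  Submodule.span (FreeStarAlg g) S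

/-- `p` is irreducible: it cannot be written as a product of two polynomials of
strictly smaller degree. -/
def Irred (p : FreeStarAlg g) : Prop :=
  ¬ ∃ q r : FreeStarAlg g, p = q * r ∧ deg q < deg p ∧ deg r < deg p

/-- `p` is analytic: it contains no starred variables. -/
def IsAnalytic (p : FreeStarAlg g) : Prop :=
  ∀ w ∈ p.coeff.support, ∀ l ∈ FreeMonoid.toList w, l.isLeft

end FreeStarAlg

open FreeStarAlg

/-!
Induct on a bound `K` for the degrees of the `aᵢ` in `∑ aᵢ* aᵢ = b p + p* c`. At a word `x* y`
with `|x| = |y| = K` only the top-degree parts of the `aᵢ` contribute to the left side, so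
`∑ aᵢ(x) aᵢ(y) = (b p)(x* y) + (c* p)(y* x)`.

If `K < deg p`, take `y = x`: the last `deg p` letters of `x* x` contain, at the junction, a
factor `xⱼ* xⱼ` or `xⱼ xⱼ*`, so both terms vanish and the top parts of the `aᵢ` are zero.
If `K ≥ deg p`, the right side lies, as a function of `y` and of `x`, in the space `U` of
top-degree coefficient vectors of products `D p`; so `∑ ⟪aᵢ, λ⟫² = 0` for every `λ ⊥ U`, and
the top part of each `aᵢ` is that of some `Dᵢ p`.
In both cases `aᵢ - Dᵢ p` has degree `< K` and `∑ (aᵢ - Dᵢ p)* (aᵢ - Dᵢ p)` is still in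
`I + I*`.
-/

theorem mem_of_forall_sum_mul_eq_add {ι W : Type*} [Fintype ι] [Fintype W]
    {U : Submodule ℝ (EuclideanSpace ℝ W)} {α : ι → EuclideanSpace ℝ W}
    {β γ : W → EuclideanSpace ℝ W} (hβ : ∀ w, β w ∈ U) (hγ : ∀ w, γ w ∈ U)
    (h : ∀ w w', ∑ i, α i w * α i w' = β w w' + γ w' w) (i : ι) : α i ∈ U := by
  rw [← U.orthogonal_orthogonal]
  intro lam hlam
  have hinner : ∀ x : EuclideanSpace ℝ W, inner ℝ x lam = ∑ w, x w * lam w := by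
    intro x; simp [PiLp.inner_apply, mul_comm]
  have hβ0 : ∀ w, ∑ w', β w w' * lam w' = 0 := fun w => by
    rw [← hinner]; exact U.inner_right_of_mem_orthogonal (hβ w) hlam
  have hγ0 : ∀ w, ∑ w', γ w w' * lam w' = 0 := fun w => by
    rw [← hinner]; exact U.inner_right_of_mem_orthogonal (hγ w) hlam
  have hsq : ∑ j, inner ℝ (α j) lam * inner ℝ (α j) lam = 0 := by
    calc ∑ j, inner ℝ (α j) lam * inner ℝ (α j) lam
        = ∑ w, ∑ w', lam w * lam w' * ∑ j, α j w * α j w' := by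
          simp only [hinner, Finset.sum_mul, Finset.mul_sum]
          rw [Finset.sum_comm]
          refine Finset.sum_congr rfl fun w _ => ?_
          rw [Finset.sum_comm]
          exact Finset.sum_congr rfl fun w' _ => Finset.sum_congr rfl fun j _ => by ring
      _ = ∑ w, lam w * ∑ w', β w w' * lam w' + ∑ w', lam w' * ∑ w, γ w' w * lam w := by
          simp only [h, mul_add, Finset.sum_add_distrib, Finset.mul_sum]
          rw [Finset.sum_comm (f := fun w w' => lam w * lam w' * γ w' w)]
          congr 1 <;>
            exact Finset.sum_congr rfl fun _ _ => Finset.sum_congr rfl fun _ _ => by ring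
      _ = 0 := by simp [hβ0, hγ0]
  rw [real_inner_comm]
  exact (Finset.sum_mul_self_eq_zero_iff _ _).1 hsq i (Finset.mem_univ i)

lemma FreeMonoid.length_add_length_of_mul_eq {α : Type*} {x y x' y' : FreeMonoid α}
    (he : x' * y' = x * y) :
    (toList x').length + (toList y').length = (toList x).length + (toList y).length := by
  simpa using congrArg (fun w => (toList w).length) he

namespace MonoidAlgebra

open FreeMonoid

variable {R α : Type*} [Semiring R]

lemma coeff_mul_mul_of_length_eq {f h : MonoidAlgebra R (FreeMonoid α)} {x y : FreeMonoid α}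
    (H : ∀ x' ∈ f.coeff.support, ∀ y' ∈ h.coeff.support,
      x' * y' = x * y → (toList x').length = (toList x).length) :
    (f * h).coeff (x * y) = f.coeff x * h.coeff y :=
  coeff_mul_mul_of_uniqueMul fun x' y' hx' hy' he =>
    have hxy := List.append_inj (congrArg toList he) (H x' hx' y' hy' he)
    ⟨toList.injective hxy.1, toList.injective hxy.2⟩

lemma coeff_mul_mul_of_length_le {m n : ℕ} {f h : MonoidAlgebra R (FreeMonoid α)}
    (hf : ∀ w ∈ f.coeff.support, (toList w).length ≤ m)
    (hh : ∀ w ∈ h.coeff.support, (toList w).length ≤ n) {x y : FreeMonoid α}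
    (hx : (toList x).length = m) (hy : (toList y).length = n) :
    (f * h).coeff (x * y) = f.coeff x * h.coeff y :=
  coeff_mul_mul_of_length_eq fun x' hx' y' hy' he => by
    have := length_add_length_of_mul_eq he
    have := hf x' hx'
    have := hh y' hy'
    omega

end MonoidAlgebra

namespace FreeStarAlg

open FreeMonoid MonoidAlgebra

variable {g : ℕ}

def NoStarPair (p : FreeStarAlg g) : Prop :=
  ∀ w ∈ p.coeff.support, ¬ ∃ (u v : FreeMonoid (Fin g ⊕ Fin g)) (l : Fin g ⊕ Fin g),
    w = u * (of l * of (Sum.swap l)) * v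

@[simp]
lemma toList_starWord (w : FreeMonoid (Fin g ⊕ Fin g)) :
    toList (starWord w) = ((toList w).map Sum.swap).reverse := rfl

lemma length_starWord (w : FreeMonoid (Fin g ⊕ Fin g)) :
    (toList (starWord w)).length = (toList w).length := by
  simp

@[simp]
lemma starWord_starWord (w : FreeMonoid (Fin g ⊕ Fin g)) : starWord (starWord w) = w := by
  simp [starWord, List.map_reverse]

lemma starWord_mul (u v : FreeMonoid (Fin g ⊕ Fin g)) :
    starWord (u * v) = starWord v * starWord u := by
  simp [starWord, ofList_append]

lemma starWord_injective : Function.Injective (starWord (g := g)) :=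
  Function.LeftInverse.injective starWord_starWord

@[simp]
lemma coeff_starP (f : FreeStarAlg g) (w : FreeMonoid (Fin g ⊕ Fin g)) :
    (starP f).coeff w = f.coeff (starWord w) := by
  rw [← Finsupp.mapDomain_apply starWord_injective f.coeff (starWord w), starWord_starWord]
  rfl

@[simp]
lemma starP_zero : starP (0 : FreeStarAlg g) = 0 := by
  ext w; simp

lemma starP_add (f h : FreeStarAlg g) : starP (f + h) = starP f + starP h := by
  ext w; simp

lemma starP_sub (f h : FreeStarAlg g) : starP (f - h) = starP f - starP h := by
  ext w; simp

@[simp]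
lemma starP_starP (f : FreeStarAlg g) : starP (starP f) = f := by
  ext w; simp

lemma starP_sum {ι : Type*} (s : Finset ι) (f : ι → FreeStarAlg g) :
    starP (∑ i ∈ s, f i) = ∑ i ∈ s, starP (f i) := by
  ext w; simp [Finsupp.finsetSum_apply]

@[simp]
lemma starP_single (w : FreeMonoid (Fin g ⊕ Fin g)) (c : ℝ) :
    starP (single w c) = single (starWord w) c := by
  simp [starP, Finsupp.mapDomain_single]

lemma starP_mul (f h : FreeStarAlg g) : starP (f * h) = starP h * starP f := by
  induction f using MonoidAlgebra.induction_linear with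
  | zero => simp
  | add f₁ f₂ h₁ h₂ => rw [add_mul, starP_add, starP_add, h₁, h₂, mul_add]
  | single u c =>
    induction h using MonoidAlgebra.induction_linear with
    | zero => simp
    | add h₁ h₂ k₁ k₂ => rw [mul_add, starP_add, starP_add, k₁, k₂, add_mul]
    | single v e => simp [starWord_mul, mul_comm]

lemma coeff_starP_mul (f h : FreeStarAlg g) (z : FreeMonoid (Fin g ⊕ Fin g)) :
    (starP f * h).coeff z = (starP h * f).coeff (starWord z) := by
  rw [← coeff_starP, starP_mul, starP_starP]

namespace IsHom

variable {d : ℕ} {p : FreeStarAlg g}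

lemma coeff_mul_mul (hp : IsHom d p) (f : FreeStarAlg g) {x y : FreeMonoid (Fin g ⊕ Fin g)}
    (hy : (toList y).length = d) : (f * p).coeff (x * y) = f.coeff x * p.coeff y :=
  coeff_mul_mul_of_length_eq fun x' _ y' hy' he => by
    have := length_add_length_of_mul_eq he
    have := hp y' hy'
    omega

lemma mul {m : ℕ} {f : FreeStarAlg g} (hf : IsHom m f) (hp : IsHom d p) :
    IsHom (m + d) (f * p) := by
  classical
  intro w hw
  obtain ⟨x, hx, y, hy, rfl⟩ := Finset.mem_mul.1 (support_coeff_mul_subset f p hw)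
  simp [hf x hx, hp y hy]

lemma coeff_mul_starWord_mul_self_eq_zero (hp : IsHom d p) (hforb : NoStarPair p)
    (f : FreeStarAlg g) {w : FreeMonoid (Fin g ⊕ Fin g)} (hw : (toList w).length < d) :
    (f * p).coeff (starWord w * w) = 0 := by
  classical
  by_contra hne
  obtain ⟨x, -, y, hy, hxy⟩ := Finset.mem_mul.1
    (support_coeff_mul_subset f p (Finsupp.mem_support_iff.2 hne))
  have hyd := hp y hy
  -- the last `d` letters of `w* w` straddle the junction, where `w*` ends with the swap of
  -- `w`'s first letter
  obtain ⟨l, w', hw'⟩ : ∃ l w', toList w = l :: w' := by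
    cases hl : toList w with
    | nil =>
      have := length_add_length_of_mul_eq hxy
      simp only [length_starWord, hl, List.length_nil, hyd] at this hw
      omega
    | cons l w' => exact ⟨l, w', rfl⟩
  have hsplit :
      toList (starWord w * w) = (w'.map Sum.swap).reverse ++ ([Sum.swap l, l] ++ w') := by
    simp [hw']
  have hsuffix : [Sum.swap l, l] ++ w' <:+ toList y := by
    refine List.suffix_of_suffix_length_le (hsplit ▸ List.suffix_append _ _) ?_ ?_
    · rw [← hxy]; exact List.suffix_append _ _
    · simp only [hw', List.length_cons] at hw; simp; omega
  obtain ⟨t, ht⟩ := hsuffix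
  refine hforb y hy ⟨ofList t, ofList w', Sum.swap l, toList.injective ?_⟩
  simp [← ht]

end IsHom

section TopDegree

variable {r K d : ℕ} {p b c : FreeStarAlg g} {a : Fin r → FreeStarAlg g}

lemma sum_coeff_mul_coeff_eq (ha : ∀ i, ∀ w ∈ (a i).coeff.support, (toList w).length ≤ K)
    (heq : ∑ i, starP (a i) * a i = b * p + starP p * c) {x y : FreeMonoid (Fin g ⊕ Fin g)}
    (hx : (toList x).length = K) (hy : (toList y).length = K) :
    ∑ i, (a i).coeff x * (a i).coeff y
      = (b * p).coeff (starWord x * y) + (starP c * p).coeff (starWord y * x) := by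
  have hstar : ∀ i, ∀ w ∈ (starP (a i)).coeff.support, (toList w).length ≤ K := fun i w hw => by
    rw [Finsupp.mem_support_iff, coeff_starP] at hw
    simpa [length_starWord] using ha i _ (Finsupp.mem_support_iff.2 hw)
  calc ∑ i, (a i).coeff x * (a i).coeff y
      = (∑ i, starP (a i) * a i).coeff (starWord x * y) := by
        simp only [coeff_sum, Finsupp.finsetSum_apply]
        refine Finset.sum_congr rfl fun i _ => ?_
        rw [coeff_mul_mul_of_length_le (hstar i) (ha i) (by rw [length_starWord, hx]) hy,
          coeff_starP, starWord_starWord]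
    _ = _ := by
        rw [heq, coeff_add, Finsupp.add_apply, coeff_starP_mul, starWord_mul, starWord_starWord]

lemma coeff_eq_zero_of_lt (hp : IsHom d p) (hforb : NoStarPair p)
    (ha : ∀ i, ∀ w ∈ (a i).coeff.support, (toList w).length ≤ K)
    (heq : ∑ i, starP (a i) * a i = b * p + starP p * c) (hK : K < d)
    (i : Fin r) {w : FreeMonoid (Fin g ⊕ Fin g)} (hw : (toList w).length = K) :
    (a i).coeff w = 0 := by
  have hsq : ∑ j, (a j).coeff w * (a j).coeff w = 0 := by
    rw [sum_coeff_mul_coeff_eq ha heq hw hw,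
      hp.coeff_mul_starWord_mul_self_eq_zero hforb _ (by omega),
      hp.coeff_mul_starWord_mul_self_eq_zero hforb _ (by omega), add_zero]
  exact (Finset.sum_mul_self_eq_zero_iff _ _).1 hsq i (Finset.mem_univ i)

def ofCoeffs {n : ℕ} (D : List.Vector (Fin g ⊕ Fin g) n → ℝ) : FreeStarAlg g :=
  ∑ u, single (ofList u.toList) (D u)

lemma coeff_ofCoeffs {n : ℕ} (D : List.Vector (Fin g ⊕ Fin g) n → ℝ)
    (u : List.Vector (Fin g ⊕ Fin g) n) : (ofCoeffs D).coeff (ofList u.toList) = D u := by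
  classical
  simp [ofCoeffs, Finsupp.finsetSum_apply, Finsupp.single_apply,
    List.Vector.toList_injective.eq_iff]

lemma isHom_ofCoeffs {n : ℕ} (D : List.Vector (Fin g ⊕ Fin g) n → ℝ) :
    IsHom n (ofCoeffs D) := by
  classical
  intro w hw
  rw [ofCoeffs, coeff_sum] at hw
  obtain ⟨u, -, hu⟩ := Finsupp.mem_support_finsetSum w hw
  rw [Finset.mem_singleton.1 (Finsupp.support_single_subset hu)]
  exact u.toList_length

/-- For `p` homogeneous of degree `d`, the coefficients of `ofCoeffs D * p` at the words `u v`
with `|u| = n`, `|v| = d`. -/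
def mulCoeffs (p : FreeStarAlg g) (n d : ℕ) : (List.Vector (Fin g ⊕ Fin g) n → ℝ) →ₗ[ℝ]
    EuclideanSpace ℝ (List.Vector (Fin g ⊕ Fin g) n × List.Vector (Fin g ⊕ Fin g) d) where
  toFun D := WithLp.toLp 2 fun uv => D uv.1 * p.coeff (ofList uv.2.toList)
  map_add' D D' := by ext; simp [add_mul]
  map_smul' t D := by ext; simp [mul_assoc]

lemma exists_isHom_mul_coeff_eq_of_le (hp : IsHom d p) (hdK : d ≤ K)
    (ha : ∀ i, ∀ w ∈ (a i).coeff.support, (toList w).length ≤ K)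
    (heq : ∑ i, starP (a i) * a i = b * p + starP p * c) (i : Fin r) :
    ∃ D : FreeStarAlg g, IsHom K (D * p) ∧
      ∀ w, (toList w).length = K → (a i).coeff w = (D * p).coeff w := by
  obtain ⟨n, rfl⟩ := Nat.exists_eq_add_of_le' hdK
  let word (uv : List.Vector (Fin g ⊕ Fin g) n × List.Vector (Fin g ⊕ Fin g) d) :
      FreeMonoid (Fin g ⊕ Fin g) := ofList uv.1.toList * ofList uv.2.toList
  have hword : ∀ uv, (toList (word uv)).length = n + d := by simp [word]
  have hcoeff : ∀ (f : FreeStarAlg g) x uv, (f * p).coeff (x * word uv)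
      = mulCoeffs p n d (fun u => f.coeff (x * ofList u.toList)) uv := by
    intro f x uv
    rw [← mul_assoc, hp.coeff_mul_mul f (by simp)]
    rfl
  obtain ⟨D, hD⟩ : WithLp.toLp 2 (fun uv => (a i).coeff (word uv))
      ∈ LinearMap.range (mulCoeffs p n d) := by
    refine mem_of_forall_sum_mul_eq_add
      (α := fun j => WithLp.toLp 2 fun uv => (a j).coeff (word uv))
      (β := fun uv => mulCoeffs p n d fun u => b.coeff (starWord (word uv) * ofList u.toList))
      (γ := fun uv => mulCoeffs p n d fun u =>
        (starP c).coeff (starWord (word uv) * ofList u.toList))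
      (fun _ => LinearMap.mem_range_self _ _) (fun _ => LinearMap.mem_range_self _ _)
      (fun uv uv' => ?_) i
    rw [sum_coeff_mul_coeff_eq ha heq (hword uv) (hword uv'), hcoeff, hcoeff]
  refine ⟨ofCoeffs D, (isHom_ofCoeffs D).mul hp, fun w hw => ?_⟩
  let uv : List.Vector (Fin g ⊕ Fin g) n × List.Vector (Fin g ⊕ Fin g) d :=
    (⟨(toList w).take n, by simp [hw]⟩, ⟨(toList w).drop n, by simp [hw]⟩)
  have hw : w = word uv := by simp [uv, word, ← ofList_append]
  rw [hw, hp.coeff_mul_mul _ (by simp), coeff_ofCoeffs]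
  exact congrFun (congrArg WithLp.ofLp hD.symm) uv

lemma exists_isHom_mul_coeff_eq (hp : IsHom d p) (hforb : NoStarPair p)
    (ha : ∀ i, ∀ w ∈ (a i).coeff.support, (toList w).length ≤ K)
    (heq : ∑ i, starP (a i) * a i = b * p + starP p * c) (i : Fin r) :
    ∃ D : FreeStarAlg g, IsHom K (D * p) ∧
      ∀ w, (toList w).length = K → (a i).coeff w = (D * p).coeff w := by
  rcases lt_or_ge K d with hK | hK
  · refine ⟨0, by simp [IsHom], fun w hw => ?_⟩
    rw [coeff_eq_zero_of_lt hp hforb ha heq hK i hw, zero_mul, coeff_zero, Finsupp.zero_apply]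
  · exact exists_isHom_mul_coeff_eq_of_le hp hK ha heq i

end TopDegree

lemma length_lt_of_mem_support_sub {K : ℕ} {f h : FreeStarAlg g}
    (hf : ∀ w ∈ f.coeff.support, (toList w).length ≤ K) (hh : IsHom K h)
    (hfh : ∀ w, (toList w).length = K → f.coeff w = h.coeff w) :
    ∀ w ∈ (f - h).coeff.support, (toList w).length < K := by
  intro w hw
  by_contra hlt
  refine Finsupp.mem_support_iff.1 hw ?_
  rw [coeff_sub, Finsupp.sub_apply, sub_eq_zero]
  rcases (not_lt.1 hlt).eq_or_lt with hK | hK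
  · exact hfh w hK.symm
  · rw [Finsupp.notMem_support_iff.1 fun hw => absurd (hf w hw) (by omega),
      Finsupp.notMem_support_iff.1 fun hw => absurd (hh w hw) (by omega)]

lemma MemIplusIstar.sum_sub {I : Submodule (FreeStarAlg g) (FreeStarAlg g)} {r : ℕ}
    {a e : Fin r → FreeStarAlg g} (h : MemIplusIstar I (∑ i, starP (a i) * a i))
    (he : ∀ i, e i ∈ I) : MemIplusIstar I (∑ i, starP (a i - e i) * (a i - e i)) := by
  obtain ⟨u, hu, v, hv, huv⟩ := h
  refine ⟨u + ∑ i, (starP (e i) - starP (a i)) * e i,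
    add_mem hu (sum_mem fun i _ => I.smul_mem _ (he i)),
    v - ∑ i, starP (a i) * e i, sub_mem hv (sum_mem fun i _ => I.smul_mem _ (he i)), ?_⟩
  have hexpand : ∀ i, starP (a i - e i) * (a i - e i)
      = starP (a i) * a i + (starP (e i) - starP (a i)) * e i - starP (starP (a i) * e i) := by
    intro i
    rw [starP_sub, starP_mul, starP_starP]
    noncomm_ring
  rw [Finset.sum_congr rfl fun i _ => hexpand i, Finset.sum_sub_distrib, Finset.sum_add_distrib,
    huv, starP_sub, starP_sum]
  abel

lemma MemIplusIstar.exists_eq_mul_add_starP_mul {p x : FreeStarAlg g}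
    (h : MemIplusIstar (leftIdealGen {p}) x) : ∃ b c, x = b * p + starP p * c := by
  obtain ⟨u, hu, v, hv, rfl⟩ := h
  obtain ⟨b, rfl⟩ := Submodule.mem_span_singleton.1 hu
  obtain ⟨c, rfl⟩ := Submodule.mem_span_singleton.1 hv
  exact ⟨b, starP c, by rw [smul_eq_mul, smul_eq_mul, starP_mul]⟩

lemma mem_leftIdealGen_of_memIplusIstar {d : ℕ} {p : FreeStarAlg g} (hp : IsHom d p)
    (hforb : NoStarPair p) (K : ℕ) {r : ℕ} (a : Fin r → FreeStarAlg g)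
    (ha : ∀ i, ∀ w ∈ (a i).coeff.support, (toList w).length < K)
    (hmem : MemIplusIstar (leftIdealGen {p}) (∑ i, starP (a i) * a i)) (i : Fin r) :
    a i ∈ leftIdealGen {p} := by
  induction K generalizing r with
  | zero =>
    have : a i = 0 := by
      ext w
      by_contra hw
      exact Nat.not_lt_zero _ (ha i w (Finsupp.mem_support_iff.2 hw))
    exact this ▸ zero_mem _
  | succ K ih =>
    have ha' : ∀ i, ∀ w ∈ (a i).coeff.support, (toList w).length ≤ K :=
      fun i w hw => Nat.lt_succ_iff.1 (ha i w hw)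
    obtain ⟨b, c, heq⟩ := hmem.exists_eq_mul_add_starP_mul
    choose D hD hcoeff using exists_isHom_mul_coeff_eq hp hforb ha' heq
    have hDp : ∀ j, D j * p ∈ leftIdealGen {p} :=
      fun j => Submodule.smul_mem _ _ (Submodule.mem_span_singleton_self p)
    have hsub := ih (fun j => a j - D j * p)
      (fun j => length_lt_of_mem_support_sub (ha' j) (hD j) (hcoeff j)) (hmem.sum_sub hDp) i
    simpa using add_mem hsub (hDp i)

end FreeStarAlg

/-- If `p` is homogeneous and no word of `p` contains a factor
`xᵢ xᵢ*` or `xᵢ* xᵢ`, then the left ideal generated by `p` is real. -/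
theorem stmt8 {g d : ℕ} (p : FreeStarAlg g) (hp : IsHom d p)
    (h : ∀ w ∈ p.coeff.support, ¬ ∃ (u v : FreeMonoid (Fin g ⊕ Fin g)) (l : Fin g ⊕ Fin g),
        w = u * (FreeMonoid.of l * FreeMonoid.of (Sum.swap l)) * v) :
    IsRealIdeal (leftIdealGen {p}) := by
  intro r a hmem i
  refine mem_leftIdealGen_of_memIplusIstar hp h ((Finset.univ.sup fun j => deg (a j)) + 1) a
    (fun j w hw => Nat.lt_succ_of_le ?_) hmem i
  exact (Finset.le_sup hw).trans (Finset.le_sup (f := fun j => deg (a j)) (Finset.mem_univ j))
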